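/- arXiv:1612.01111 — 2 statements merged into one kernel-verified Lean document; each statement's English description precedes it below -/
import Mathlib

section
/- Let u : ℝ × ℝ → ℝ be smooth with u_x(t,x) ≠ 0 for all (t,x), and suppose u satisfies the Schwarzian-KdV equation u_t = u_xxx − (3/2) u_x⁻¹ u_xx² at every point. Then w(t,x) = u_xx(t,x)/u_x(t,x) satisfies the modified KdV equation w_t = w_xxx − (3/2) w² w_x at every point. -/
/-- Partial derivative in the first (time) variable. -/
noncomputable def pt (u : ℝ → ℝ → ℝ) : ℝ → ℝ → ℝ := fun t x => deriv (fun s => u s x) t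

/-- Partial derivative in the second (space) variable. -/
noncomputable def px (u : ℝ → ℝ → ℝ) : ℝ → ℝ → ℝ := fun t x => deriv (fun y => u t y) x


lemma hasDerivAt_px (g : ℝ → ℝ → ℝ) (hg : ContDiff ℝ (⊤ : ℕ∞) (Function.uncurry g)) (t x : ℝ) :
    HasDerivAt (fun y => g t y) (px g t x) x := by
  have h1 : DifferentiableAt ℝ (Function.uncurry g) (t, x) := (hg.differentiable (by simp)) (t, x)
  have h2 : DifferentiableAt ℝ (fun y : ℝ => ((t : ℝ), y)) x :=
    (differentiableAt_const t).prodMk differentiableAt_id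
  exact (h1.comp x h2).hasDerivAt

lemma hasDerivAt_pt (g : ℝ → ℝ → ℝ) (hg : ContDiff ℝ (⊤ : ℕ∞) (Function.uncurry g)) (t x : ℝ) :
    HasDerivAt (fun s => g s x) (pt g t x) t := by
  have h1 : DifferentiableAt ℝ (Function.uncurry g) (t, x) := (hg.differentiable (by simp)) (t, x)
  have h2 : DifferentiableAt ℝ (fun s : ℝ => (s, (x : ℝ))) t :=
    differentiableAt_id.prodMk (differentiableAt_const x)
  exact (h1.comp t h2).hasDerivAt

lemma px_eq_fderiv (g : ℝ → ℝ → ℝ) (hg : ContDiff ℝ (⊤ : ℕ∞) (Function.uncurry g)) (t x : ℝ) :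
    px g t x = fderiv ℝ (Function.uncurry g) (t, x) (0, 1) := by
  have h1 : HasFDerivAt (Function.uncurry g) (fderiv ℝ (Function.uncurry g) (t, x)) (t, x) :=
    ((hg.differentiable (by simp)) (t, x)).hasFDerivAt
  have h2 : HasDerivAt (fun y : ℝ => ((t : ℝ), y)) ((0 : ℝ), (1 : ℝ)) x :=
    (hasDerivAt_const x t).prodMk (hasDerivAt_id x)
  exact (h1.comp_hasDerivAt x h2).deriv

lemma pt_eq_fderiv (g : ℝ → ℝ → ℝ) (hg : ContDiff ℝ (⊤ : ℕ∞) (Function.uncurry g)) (t x : ℝ) :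
    pt g t x = fderiv ℝ (Function.uncurry g) (t, x) (1, 0) := by
  have h1 : HasFDerivAt (Function.uncurry g) (fderiv ℝ (Function.uncurry g) (t, x)) (t, x) :=
    ((hg.differentiable (by simp)) (t, x)).hasFDerivAt
  have h2 : HasDerivAt (fun s : ℝ => (s, (x : ℝ))) ((1 : ℝ), (0 : ℝ)) t :=
    (hasDerivAt_id t).prodMk (hasDerivAt_const t x)
  exact (h1.comp_hasDerivAt t h2).deriv

lemma uncurry_px_eq (g : ℝ → ℝ → ℝ) (hg : ContDiff ℝ (⊤ : ℕ∞) (Function.uncurry g)) :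
    Function.uncurry (px g) = fun p : ℝ × ℝ => fderiv ℝ (Function.uncurry g) p ((0 : ℝ), (1 : ℝ)) := by
  funext p
  obtain ⟨t, x⟩ := p
  exact px_eq_fderiv g hg t x

lemma contDiff_px (g : ℝ → ℝ → ℝ) (hg : ContDiff ℝ (⊤ : ℕ∞) (Function.uncurry g)) :
    ContDiff ℝ (⊤ : ℕ∞) (Function.uncurry (px g)) := by
  rw [uncurry_px_eq g hg]
  exact (hg.fderiv_right (by simp)).clm_apply contDiff_const

lemma clairaut (g : ℝ → ℝ → ℝ) (hg : ContDiff ℝ (⊤ : ℕ∞) (Function.uncurry g)) (t x : ℝ) :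
    pt (px g) t x = px (pt g) t x := by
  set f := Function.uncurry g with hf
  have hF : ContDiff ℝ (⊤ : ℕ∞) (fderiv ℝ f) := hg.fderiv_right (by simp)
  have hsymm : IsSymmSndFDerivAt ℝ f (t, x) := hg.contDiffAt.isSymmSndFDerivAt (by rw [minSmoothness_of_isRCLikeNormedField]; exact WithTop.coe_le_coe.mpr (le_top : (2 : ℕ∞) ≤ ⊤))
  have key : ∀ v w : ℝ × ℝ,
      fderiv ℝ (fun p : ℝ × ℝ => fderiv ℝ f p v) (t, x) w
        = fderiv ℝ (fderiv ℝ f) (t, x) w v := by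
    intro v w
    rw [fderiv_clm_apply ((hF.differentiable (by simp)) (t, x)) (differentiableAt_const v)]
    simp
  have hupx : Function.uncurry (px g) = fun p : ℝ × ℝ => fderiv ℝ f p ((0 : ℝ), (1 : ℝ)) :=
    uncurry_px_eq g hg
  have hupt : Function.uncurry (pt g) = fun p : ℝ × ℝ => fderiv ℝ f p ((1 : ℝ), (0 : ℝ)) := by
    funext p; obtain ⟨s, y⟩ := p; exact pt_eq_fderiv g hg s y
  have h1 : pt (px g) t x = fderiv ℝ (fderiv ℝ f) (t, x) (1, 0) (0, 1) := by
    rw [pt_eq_fderiv (px g) (contDiff_px g hg) t x, hupx, key]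
  have hcpt : ContDiff ℝ (⊤ : ℕ∞) (Function.uncurry (pt g)) := by
    rw [hupt]; exact hF.clm_apply contDiff_const
  have h2 : px (pt g) t x = fderiv ℝ (fderiv ℝ f) (t, x) (0, 1) (1, 0) := by
    rw [px_eq_fderiv (pt g) hcpt t x, hupt, key]
  rw [h1, h2, hsymm]

set_option maxHeartbeats 1000000 in
/-- The scaling differential invariant `w = u_xx/u_x` maps a
solution of the Schwarzian-KdV equation `u_t = u_xxx − (3/2) u_x⁻¹ u_xx²`
to a solution of the modified KdV equation `w_t = w_xxx − (3/2) w² w_x`. -/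
theorem stmt_13 (u : ℝ → ℝ → ℝ) (hu : ContDiff ℝ (⊤ : ℕ∞) (Function.uncurry u))
    (hux : ∀ t x, px u t x ≠ 0)
    (heq : ∀ t x, pt u t x =
      px (px (px u)) t x - (3 / 2) * (px u t x)⁻¹ * (px (px u) t x) ^ 2) :
    ∀ t x, pt (fun t x => px (px u) t x / px u t x) t x =
      px (px (px (fun t x => px (px u) t x / px u t x))) t x
      - (3 / 2) * (px (px u) t x / px u t x) ^ 2
          * px (fun t x => px (px u) t x / px u t x) t x := by
  have s1 := contDiff_px u hu
  have s2 := contDiff_px _ s1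
  have s3 := contDiff_px _ s2
  have s4 := contDiff_px _ s3
  intro t x
  set U1 : ℝ → ℝ → ℝ := px u with hU1
  set U2 : ℝ → ℝ → ℝ := px U1 with hU2
  set U3 : ℝ → ℝ → ℝ := px U2 with hU3
  set U4 : ℝ → ℝ → ℝ := px U3 with hU4
  set U5 : ℝ → ℝ → ℝ := px U4 with hU5
  have hne : ∀ a b, U1 a b ≠ 0 := hux
  have Hx1 : ∀ a b, HasDerivAt (fun y => U1 a y) (U2 a b) b := hasDerivAt_px U1 s1
  have Hx2 : ∀ a b, HasDerivAt (fun y => U2 a y) (U3 a b) b := hasDerivAt_px U2 s2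
  have Hx3 : ∀ a b, HasDerivAt (fun y => U3 a y) (U4 a b) b := hasDerivAt_px U3 s3
  have Hx4 : ∀ a b, HasDerivAt (fun y => U4 a y) (U5 a b) b := hasDerivAt_px U4 s4
  have Ht1 : ∀ a b, HasDerivAt (fun s => U1 s b) (pt U1 a b) a := hasDerivAt_pt U1 s1
  have Ht2 : ∀ a b, HasDerivAt (fun s => U2 s b) (pt U2 a b) a := hasDerivAt_pt U2 s2
  have E1 : ∀ a b, pt U1 a b =
      U4 a b - 3 * U2 a b * U3 a b / U1 a b + 3 / 2 * U2 a b ^ 3 / U1 a b ^ 2 := by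
    intro a b
    have hc : pt U1 a b = px (pt u) a b := clairaut u hu a b
    rw [hc]
    show deriv (fun y => pt u a y) b = _
    have hfun : (fun y => pt u a y)
        = fun y => U3 a y - 3 / 2 * (U1 a y)⁻¹ * U2 a y ^ 2 := by
      funext y; exact heq a y
    rw [hfun]
    have h := (Hx3 a b).sub
      ((((Hx1 a b).inv (hne a b)).const_mul (3 / 2 : ℝ)).mul ((Hx2 a b).pow 2))
    erw [h.deriv]
    simp only [Pi.pow_apply, Pi.mul_apply, Pi.sub_apply, Pi.add_apply, Pi.div_apply, Pi.inv_apply]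
    field_simp [hne a b]
    ring
  have E2 : ∀ a b, pt U2 a b =
      U5 a b - 3 * U3 a b ^ 2 / U1 a b - 3 * U2 a b * U4 a b / U1 a b
        + 15 / 2 * U2 a b ^ 2 * U3 a b / U1 a b ^ 2 - 3 * U2 a b ^ 4 / U1 a b ^ 3 := by
    intro a b
    have hc : pt U2 a b = px (pt U1) a b := clairaut U1 s1 a b
    rw [hc]
    show deriv (fun y => pt U1 a y) b = _
    have hfun : (fun y => pt U1 a y)
        = fun y => U4 a y - 3 * U2 a y * U3 a y / U1 a y + 3 / 2 * U2 a y ^ 3 / U1 a y ^ 2 := by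
      funext y; exact E1 a y
    rw [hfun]
    have h := ((Hx4 a b).sub
        ((((Hx2 a b).const_mul (3 : ℝ)).mul (Hx3 a b)).div (Hx1 a b) (hne a b))).add
      ((((Hx2 a b).pow 3).const_mul (3 / 2 : ℝ)).div ((Hx1 a b).pow 2)
        (pow_ne_zero 2 (hne a b)))
    erw [h.deriv]
    simp only [Pi.pow_apply, Pi.mul_apply, Pi.sub_apply, Pi.add_apply, Pi.div_apply, Pi.inv_apply]
    field_simp [hne a b]
    ring
  have W1 : ∀ a b, px (fun t x => U2 t x / U1 t x) a b
      = (U3 a b * U1 a b - U2 a b ^ 2) / U1 a b ^ 2 := by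
    intro a b
    show deriv (fun y => U2 a y / U1 a y) b = _
    have h := (Hx2 a b).div (Hx1 a b) (hne a b)
    erw [h.deriv]
    ring
  have W2 : ∀ a b, px (px (fun t x => U2 t x / U1 t x)) a b
      = (U4 a b * U1 a b ^ 2 - 3 * U1 a b * U2 a b * U3 a b + 2 * U2 a b ^ 3)
          / U1 a b ^ 3 := by
    intro a b
    show deriv (fun y => px (fun t x => U2 t x / U1 t x) a y) b = _
    have hfun : (fun y => px (fun t x => U2 t x / U1 t x) a y)
        = fun y => (U3 a y * U1 a y - U2 a y ^ 2) / U1 a y ^ 2 := by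
      funext y; exact W1 a y
    rw [hfun]
    have h := (((Hx3 a b).mul (Hx1 a b)).sub ((Hx2 a b).pow 2)).div
      ((Hx1 a b).pow 2) (pow_ne_zero 2 (hne a b))
    erw [h.deriv]
    simp only [Pi.pow_apply, Pi.mul_apply, Pi.sub_apply, Pi.add_apply, Pi.div_apply, Pi.inv_apply]
    field_simp [hne a b]
    ring
  have W3 : ∀ a b, px (px (px (fun t x => U2 t x / U1 t x))) a b
      = (U5 a b * U1 a b ^ 3 - 3 * U1 a b ^ 2 * U3 a b ^ 2 - 4 * U1 a b ^ 2 * U2 a b * U4 a b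
          + 12 * U1 a b * U2 a b ^ 2 * U3 a b - 6 * U2 a b ^ 4) / U1 a b ^ 4 := by
    intro a b
    show deriv (fun y => px (px (fun t x => U2 t x / U1 t x)) a y) b = _
    have hfun : (fun y => px (px (fun t x => U2 t x / U1 t x)) a y)
        = fun y => (U4 a y * U1 a y ^ 2 - 3 * U1 a y * U2 a y * U3 a y + 2 * U2 a y ^ 3)
            / U1 a y ^ 3 := by
      funext y; exact W2 a y
    rw [hfun]
    have h := ((((Hx4 a b).mul ((Hx1 a b).pow 2)).sub
        ((((Hx1 a b).const_mul (3 : ℝ)).mul (Hx2 a b)).mul (Hx3 a b))).add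
        (((Hx2 a b).pow 3).const_mul (2 : ℝ))).div
      ((Hx1 a b).pow 3) (pow_ne_zero 3 (hne a b))
    erw [h.deriv]
    simp only [Pi.pow_apply, Pi.mul_apply, Pi.sub_apply, Pi.add_apply, Pi.div_apply, Pi.inv_apply]
    field_simp [hne a b]
    ring
  have Wt : pt (fun t x => U2 t x / U1 t x) t x
      = (pt U2 t x * U1 t x - U2 t x * pt U1 t x) / U1 t x ^ 2 := by
    show deriv (fun s => U2 s x / U1 s x) t = _
    exact ((Ht2 t x).div (Ht1 t x) (hne t x)).deriv
  rw [Wt, E1 t x, E2 t x, W3 t x, W1 t x]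
  field_simp [hne t x]
  have h11 : U1 t x ^ 11 * (U1 t x)⁻¹ ^ 11 = 1 := by
    rw [← mul_pow, mul_inv_cancel₀ (hne t x), one_pow]
  ring
end

section
/- Let f : ℝ → ℝ be smooth, let σ : ℝ → ℝ be smooth, nowhere zero, with σ' = f·σ, let W : ℝ → ℝ be smooth with W' = σ, set Q₂ = σ·W, and let R : ℝ → ℝ be smooth with R' = Q₂. If a smooth function u : ℝ × ℝ → ℝ satisfies u_t = u_xxx + 3 f(u) u_x u_xx + (f'(u) + f(u)²) u_x³ at every point, then ∂_t [ R(u(t,x)) ] = ∂_x [ Q₂(u) u_xx + (1/2)(3 f(u) Q₂(u) − Q₂'(u)) u_x² ] at every point, where ∂_t and ∂_x denote partial derivatives of the bracketed expressions as functions of (t,x). -/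
open Function

lemma hasDerivAt_sliceX {u : ℝ → ℝ → ℝ} (hu : ContDiff ℝ (⊤ : ℕ∞) (uncurry u)) (t x : ℝ) :
    HasDerivAt (fun y => u t y) (fderiv ℝ (uncurry u) (t, x) (0, 1)) x := by
  have h := (hu.differentiable (by simp) (t, x)).hasFDerivAt
  have hc : HasDerivAt (fun y : ℝ => ((t, y) : ℝ × ℝ)) ((0 : ℝ), (1 : ℝ)) x :=
    HasDerivAt.prodMk (hasDerivAt_const x t) (hasDerivAt_id x)
  exact h.comp_hasDerivAt x hc

lemma hasDerivAt_sliceT {u : ℝ → ℝ → ℝ} (hu : ContDiff ℝ (⊤ : ℕ∞) (uncurry u)) (t x : ℝ) :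
    HasDerivAt (fun s => u s x) (fderiv ℝ (uncurry u) (t, x) (1, 0)) t := by
  have h := (hu.differentiable (by simp) (t, x)).hasFDerivAt
  have hc : HasDerivAt (fun s : ℝ => ((s, x) : ℝ × ℝ)) ((1 : ℝ), (0 : ℝ)) t :=
    HasDerivAt.prodMk (hasDerivAt_id t) (hasDerivAt_const t x)
  exact h.comp_hasDerivAt t hc

lemma px_eq {u : ℝ → ℝ → ℝ} (hu : ContDiff ℝ (⊤ : ℕ∞) (uncurry u)) (t x : ℝ) :
    px u t x = fderiv ℝ (uncurry u) (t, x) (0, 1) := (hasDerivAt_sliceX hu t x).deriv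

lemma pt_eq {u : ℝ → ℝ → ℝ} (hu : ContDiff ℝ (⊤ : ℕ∞) (uncurry u)) (t x : ℝ) :
    pt u t x = fderiv ℝ (uncurry u) (t, x) (1, 0) := (hasDerivAt_sliceT hu t x).deriv

lemma contDiff_px_s19 {u : ℝ → ℝ → ℝ} (hu : ContDiff ℝ (⊤ : ℕ∞) (uncurry u)) :
    ContDiff ℝ (⊤ : ℕ∞) (uncurry (px u)) := by
  have h : uncurry (px u) = fun p : ℝ × ℝ => fderiv ℝ (uncurry u) p (0, 1) := by
    funext p
    exact px_eq hu p.1 p.2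
  rw [h]
  exact (hu.fderiv_right (by simp)).clm_apply contDiff_const

/-- In the linearizable class `u_t = u_xxx + 3f(u)u_x u_xx +
(f'(u)+f(u)²)u_x³`, the multiplier `Q₂ = σ·W` (where `σ' = fσ`, `W' = σ`)
produces the local conservation law
`∂_t[R(u)] = ∂_x[Q₂(u) u_xx + (1/2)(3 f(u) Q₂(u) − Q₂'(u)) u_x²]`,
where `R' = Q₂`. -/
theorem stmt_19 (f σ W R : ℝ → ℝ)
    (hf : ContDiff ℝ (⊤ : ℕ∞) f)
    (hσ : ContDiff ℝ (⊤ : ℕ∞) σ) (hσ0 : ∀ s, σ s ≠ 0)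
    (hσ' : ∀ s, deriv σ s = f s * σ s)
    (hW : ContDiff ℝ (⊤ : ℕ∞) W) (hW' : ∀ s, deriv W s = σ s)
    (hR : ContDiff ℝ (⊤ : ℕ∞) R) (hR' : ∀ s, deriv R s = σ s * W s)
    (u : ℝ → ℝ → ℝ) (hu : ContDiff ℝ (⊤ : ℕ∞) (Function.uncurry u))
    (heq : ∀ t x, pt u t x =
      px (px (px u)) t x
      + 3 * f (u t x) * px u t x * px (px u) t x
      + (deriv f (u t x) + (f (u t x)) ^ 2) * (px u t x) ^ 3) :
    ∀ t x, pt (fun t x => R (u t x)) t x =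
      px (fun t x =>
        (σ (u t x) * W (u t x)) * px (px u) t x
        + (1 / 2) * (3 * f (u t x) * (σ (u t x) * W (u t x))
            - deriv (fun s => σ s * W s) (u t x)) * (px u t x) ^ 2) t x := by
  have hQ' : ∀ z, deriv (fun s => σ s * W s) z = f z * σ z * W z + σ z * σ z := by
    intro z
    rw [deriv_fun_mul (hσ.differentiable (by simp) z) (hW.differentiable (by simp) z), hσ' z, hW' z]
  have hu1 : ContDiff ℝ (⊤ : ℕ∞) (uncurry (px u)) := contDiff_px_s19 hu
  have hu2 : ContDiff ℝ (⊤ : ℕ∞) (uncurry (px (px u))) := contDiff_px_s19 hu1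
  intro t x
  simp only [hQ']
  -- basic slice derivatives
  have h1 : HasDerivAt (fun y => u t y) (px u t x) x := by
    have := hasDerivAt_sliceX hu t x; rwa [← px_eq hu] at this
  have h2 : HasDerivAt (fun y => px u t y) (px (px u) t x) x := by
    have := hasDerivAt_sliceX hu1 t x; rwa [← px_eq hu1] at this
  have h3 : HasDerivAt (fun y => px (px u) t y) (px (px (px u)) t x) x := by
    have := hasDerivAt_sliceX hu2 t x; rwa [← px_eq hu2] at this
  have h0 : HasDerivAt (fun s => u s x) (pt u t x) t := by
    have := hasDerivAt_sliceT hu t x; rwa [← pt_eq hu] at this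
  -- compositions
  have hfu : HasDerivAt (fun y => f (u t y)) (deriv f (u t x) * px u t x) x :=
    ((hf.differentiable (by simp) (u t x)).hasDerivAt).comp x h1
  have hσu : HasDerivAt (fun y => σ (u t y)) (f (u t x) * σ (u t x) * px u t x) x := by
    have := ((hσ.differentiable (by simp) (u t x)).hasDerivAt).comp x h1
    rwa [hσ'] at this
  have hWu : HasDerivAt (fun y => W (u t y)) (σ (u t x) * px u t x) x := by
    have := ((hW.differentiable (by simp) (u t x)).hasDerivAt).comp x h1
    rwa [hW'] at this
  -- LHS
  have hL : HasDerivAt (fun s => R (u s x)) (σ (u t x) * W (u t x) * pt u t x) t := by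
    have hRd : HasDerivAt R (σ (u t x) * W (u t x)) (u t x) := by
      have := ((hR.differentiable (by simp) (u t x)).hasDerivAt)
      rwa [hR'] at this
    exact hRd.comp t h0
  have hLHS : pt (fun t x => R (u t x)) t x = σ (u t x) * W (u t x) * pt u t x := hL.deriv
  -- RHS
  have hX : HasDerivAt
      (fun y => 3 * f (u t y) * (σ (u t y) * W (u t y))
        - (f (u t y) * σ (u t y) * W (u t y) + σ (u t y) * σ (u t y)))
      (3 * (deriv f (u t x) * px u t x) * (σ (u t x) * W (u t x))
        + 3 * f (u t x) * (f (u t x) * σ (u t x) * px u t x * W (u t x)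
            + σ (u t x) * (σ (u t x) * px u t x))
        - ((deriv f (u t x) * px u t x * σ (u t x)
            + f (u t x) * (f (u t x) * σ (u t x) * px u t x)) * W (u t x)
          + f (u t x) * σ (u t x) * (σ (u t x) * px u t x)
          + (f (u t x) * σ (u t x) * px u t x * σ (u t x)
            + σ (u t x) * (f (u t x) * σ (u t x) * px u t x)))) x := by
    exact ((hfu.const_mul 3).mul (hσu.mul hWu)).sub (((hfu.mul hσu).mul hWu).add (hσu.mul hσu))
  have hF := ((hσu.mul hWu).mul h3).add ((hX.const_mul (1/2 : ℝ)).mul (h2.pow 2))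
  have hRHS := hF.deriv
  rw [hLHS, show px (fun t x =>
        σ (u t x) * W (u t x) * px (px u) t x
        + 1 / 2 * (3 * f (u t x) * (σ (u t x) * W (u t x))
            - (f (u t x) * σ (u t x) * W (u t x) + σ (u t x) * σ (u t x)))
          * px u t x ^ 2) t x = _ from hRHS, heq t x]
  simp only [Pi.mul_apply, Pi.pow_apply]
  push_cast
  ring
end
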